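/- Let C be a binary linear code of length n and dimension k with ℓ = dim(Hull(C)). Then any self-orthogonal code C̃ of length n+s and dimension k obtained by appending s columns to a generator matrix of C satisfies s ≥ k − ℓ. -/

import Mathlib

/-!
Writing codewords of `C` as `c ᵥ* G`, the hull is the image of `ker (G Gᵀ)` under this
injective map, so `dim Hull(C) = k - rank (G Gᵀ)`. Self-orthogonality of `[G | S]` says
`G Gᵀ + S Sᵀ = 0`, i.e. `G Gᵀ = S Sᵀ` in characteristic two, and `rank (S Sᵀ) ≤ s`.
-/

open Matrix

/-- The dual code of a binary code `C`: all vectors orthogonal to every codeword. -/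
def dualCode {ι : Type*} [Fintype ι] (C : Submodule (ZMod 2) (ι → ZMod 2)) :
    Submodule (ZMod 2) (ι → ZMod 2) where
  carrier := {x | ∀ c ∈ C, x ⬝ᵥ c = 0}
  add_mem' := by
    intro a b ha hb c hc
    simp [add_dotProduct, ha c hc, hb c hc]
  zero_mem' := by
    intro c hc
    simp
  smul_mem' := by
    intro r a ha c hc
    simp [smul_dotProduct, ha c hc]

/-- The row space (the code generated by the rows) of a matrix over `F₂`. -/
def rowSpace {k : ℕ} {ι : Type*} [Fintype ι] (G : Matrix (Fin k) ι (ZMod 2)) :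
    Submodule (ZMod 2) (ι → ZMod 2) :=
  Submodule.span (ZMod 2) (Set.range fun i => G i)

/-- The hull of a binary code: `C ∩ C⊥`. -/
def hullCode {ι : Type*} [Fintype ι] (C : Submodule (ZMod 2) (ι → ZMod 2)) :
    Submodule (ZMod 2) (ι → ZMod 2) :=
  C ⊓ dualCode C

section

variable {k : ℕ} {ι : Type*} [Fintype ι]

lemma rowSpace_eq_range_mulVecLin_transpose (G : Matrix (Fin k) ι (ZMod 2)) :
    rowSpace G = LinearMap.range Gᵀ.mulVecLin := by
  rw [range_mulVecLin]
  rfl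

lemma dualCode_rowSpace (G : Matrix (Fin k) ι (ZMod 2)) :
    dualCode (rowSpace G) = LinearMap.ker G.mulVecLin := by
  ext x
  refine ⟨fun hx => funext fun i => ?_, fun hx c hc => ?_⟩
  · change G i ⬝ᵥ x = 0
    rw [dotProduct_comm]
    exact hx (G i) (Submodule.subset_span ⟨i, rfl⟩)
  · rw [rowSpace_eq_range_mulVecLin_transpose] at hc
    obtain ⟨v, rfl⟩ := hc
    rw [LinearMap.mem_ker, mulVecLin_apply] at hx
    rw [mulVecLin_apply, dotProduct_mulVec, ← mulVec_transpose, transpose_transpose, hx,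
      zero_dotProduct]

lemma rowSpace_le_dualCode_iff (G : Matrix (Fin k) ι (ZMod 2)) :
    rowSpace G ≤ dualCode (rowSpace G) ↔ G * Gᵀ = 0 := by
  rw [dualCode_rowSpace, rowSpace_eq_range_mulVecLin_transpose, LinearMap.range_le_ker_iff,
    ← mulVecLin_mul, ← toLin'_apply', LinearEquiv.map_eq_zero_iff]

lemma hullCode_rowSpace (G : Matrix (Fin k) ι (ZMod 2)) :
    hullCode (rowSpace G) = (LinearMap.ker (G * Gᵀ).mulVecLin).map Gᵀ.mulVecLin := by
  ext x
  rw [hullCode, dualCode_rowSpace, rowSpace_eq_range_mulVecLin_transpose]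
  simp only [Submodule.mem_inf, LinearMap.mem_range, LinearMap.mem_ker, Submodule.mem_map,
    mulVecLin_mul, LinearMap.comp_apply]
  constructor
  · rintro ⟨⟨c, rfl⟩, hc⟩
    exact ⟨c, hc, rfl⟩
  · rintro ⟨c, hc, rfl⟩
    exact ⟨⟨c, rfl⟩, hc⟩

lemma finrank_hullCode_rowSpace_add_rank {G : Matrix (Fin k) ι (ZMod 2)}
    (hG : LinearIndependent (ZMod 2) (fun i => G i)) :
    Module.finrank (ZMod 2) (hullCode (rowSpace G)) + (G * Gᵀ).rank = k := by
  have hinj : Function.Injective Gᵀ.mulVecLin := by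
    rw [mulVecLin_transpose]
    exact vecMul_injective_iff.mpr hG
  rw [hullCode_rowSpace, ← LinearEquiv.finrank_eq (Submodule.equivMapOfInjective _ hinj _),
    rank, add_comm, LinearMap.finrank_range_add_finrank_ker, Module.finrank_fin_fun]

lemma mul_transpose_eq_of_rowSpace_fromCols_le_dualCode {m : ℕ} {G : Matrix (Fin k) ι (ZMod 2)}
    {S : Matrix (Fin k) (Fin m) (ZMod 2)}
    (hSO : rowSpace (fromCols G S) ≤ dualCode (rowSpace (fromCols G S))) :
    G * Gᵀ = S * Sᵀ := by
  rw [rowSpace_le_dualCode_iff, transpose_fromCols, fromCols_mul_fromRows,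
    add_eq_zero_iff_eq_neg, ZModModule.neg_eq_self] at hSO
  exact hSO

end

/-- any self-orthogonal code obtained by appending s columns to a generator
matrix of C satisfies s ≥ k − dim Hull(C). -/
theorem stmt_7 {k n s : ℕ} (G : Matrix (Fin k) (Fin n) (ZMod 2))
    (hG : LinearIndependent (ZMod 2) (fun i => G i))
    (S : Matrix (Fin k) (Fin s) (ZMod 2))
    (hSO : rowSpace (Matrix.fromCols G S) ≤ dualCode (rowSpace (Matrix.fromCols G S))) :
    s ≥ k - Module.finrank (ZMod 2) ↥(hullCode (rowSpace G)) := by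
  have hrank : (G * Gᵀ).rank ≤ s := by
    rw [mul_transpose_eq_of_rowSpace_fromCols_le_dualCode hSO]
    exact (rank_mul_le_left S Sᵀ).trans (rank_le_width S)
  have hdim := finrank_hullCode_rowSpace_add_rank hG
  omega
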